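/- arXiv:1910.13585 — 3 statements merged into one kernel-verified Lean document; each statement's English description precedes it below -/
import Mathlib

section
/- Let μ₁, μ₂ > 1 + D for some D > 0, and suppose X > 0 and Y > 0 are related by X = ((1 − 1/μ₂)·(Y + 1/μ₁)) / ((1 − 1/μ₁)·(1 + Y/μ₂)). Then (D/(1+D))·(Y/(1+Y)) < X < (1 + 1/D)·(1 + Y). -/
/-!
Write `a = 1/μ₁`, `b = 1/μ₂`, so that `X = (1 - b)(Y + a) / ((1 - a)(1 + bY))` with `a, b ∈ (0, 1)`.
Comparing numerator and denominator separately gives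
`(1 - b) · Y/(1 + Y) < X < (1 + Y)/(1 - a)`, and `μ > 1 + D` is exactly `1 - 1/μ > D/(1 + D)`.
-/

section Ratio

variable {a b Y : ℝ}

theorem one_sub_mul_div_one_add_lt_ratio (ha0 : 0 < a) (ha1 : a < 1) (hb0 : 0 < b) (hb1 : b < 1)
    (hY : 0 < Y) :
    (1 - b) * (Y / (1 + Y)) < (1 - b) * (Y + a) / ((1 - a) * (1 + b * Y)) := by
  have hden : 0 < (1 - a) * (1 + b * Y) := by have := sub_pos.2 ha1; positivity
  have hden_lt : (1 - a) * (1 + b * Y) < 1 + Y := by nlinarith [mul_pos ha0 hb0, mul_pos hb0 hY]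
  calc (1 - b) * (Y / (1 + Y)) = (1 - b) * Y / (1 + Y) := by rw [mul_div_assoc]
    _ < (1 - b) * (Y + a) / (1 + Y) := by gcongr; linarith
    _ < (1 - b) * (Y + a) / ((1 - a) * (1 + b * Y)) := by gcongr

theorem ratio_lt_one_add_div_one_sub (ha0 : 0 < a) (ha1 : a < 1) (hb0 : 0 < b) (hY : 0 < Y) :
    (1 - b) * (Y + a) / ((1 - a) * (1 + b * Y)) < (1 + Y) / (1 - a) := by
  have ha : 0 < 1 - a := sub_pos.2 ha1
  have hnum : (1 - b) * (Y + a) < 1 + Y := by nlinarith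
  have hden : 1 - a ≤ (1 - a) * (1 + b * Y) := le_mul_of_one_le_right ha.le (by nlinarith)
  calc (1 - b) * (Y + a) / ((1 - a) * (1 + b * Y)) < (1 + Y) / ((1 - a) * (1 + b * Y)) := by
        gcongr
    _ ≤ (1 + Y) / (1 - a) := by gcongr

end Ratio

theorem div_one_add_lt_one_sub_inv {D μ : ℝ} (hD : 0 < D) (hμ : 1 + D < μ) :
    D / (1 + D) < 1 - 1 / μ := by
  have h : 1 / μ < 1 / (1 + D) := one_div_lt_one_div_of_lt (by linarith) hμ
  have : 1 - 1 / (1 + D) = D / (1 + D) := by field_simp; ring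
  linarith

theorem one_div_mem_Ioo_of_one_lt {μ : ℝ} (hμ : 1 < μ) : 1 / μ ∈ Set.Ioo 0 1 := by
  have hμ0 : 0 < μ := by linarith
  exact ⟨by positivity, (div_lt_one hμ0).2 hμ⟩

theorem stmt_6_general (D mu1 mu2 X Y : ℝ) (hD : 0 < D)
    (h1 : 1 + D < mu1) (h2 : 1 + D < mu2) (hY : 0 < Y)
    (hrel : X = ((1 - 1 / mu2) * (Y + 1 / mu1)) / ((1 - 1 / mu1) * (1 + Y / mu2))) :
    (D / (1 + D)) * (Y / (1 + Y)) < X ∧ X < (1 + 1 / D) * (1 + Y) := by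
  obtain ⟨ha0, ha1⟩ := one_div_mem_Ioo_of_one_lt (μ := mu1) (by linarith)
  obtain ⟨hb0, hb1⟩ := one_div_mem_Ioo_of_one_lt (μ := mu2) (by linarith)
  have hc1 := div_one_add_lt_one_sub_inv hD h1
  have hc2 := div_one_add_lt_one_sub_inv hD h2
  have hc0 : 0 < D / (1 + D) := by positivity
  rw [hrel, div_eq_mul_one_div Y mu2, mul_comm Y]
  constructor
  · calc D / (1 + D) * (Y / (1 + Y)) < (1 - 1 / mu2) * (Y / (1 + Y)) := by gcongr
      _ < _ := one_sub_mul_div_one_add_lt_ratio ha0 ha1 hb0 hb1 hY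
  · calc _ < (1 + Y) / (1 - 1 / mu1) := ratio_lt_one_add_div_one_sub ha0 ha1 hb0 hY
      _ < (1 + Y) / (D / (1 + D)) := by gcongr
      _ = (1 + 1 / D) * (1 + Y) := by field_simp; ring

theorem stmt_6 (D mu1 mu2 X Y : ℝ) (hD : 0 < D)
    (h1 : 1 + D < mu1) (h2 : 1 + D < mu2) (hX : 0 < X) (hY : 0 < Y)
    (hrel : X = ((1 - 1 / mu2) * (Y + 1 / mu1)) / ((1 - 1 / mu1) * (1 + Y / mu2))) :
    (D / (1 + D)) * (Y / (1 + Y)) < X ∧ X < (1 + 1 / D) * (1 + Y) :=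
  stmt_6_general D mu1 mu2 X Y hD h1 h2 hY hrel
end

section
/- Let (r_n), (X_n), (V_n) be sequences of positive reals with r_n → 0. If r_n·log(V_n) converges to a limit L ≥ 0 and r_n·log(X_n) converges to M, then r_n·log(X_n·(1 + V_n)) converges to M + L. -/
open Filter

theorem stmt_11 (r X V : ℕ → ℝ) (L M : ℝ) (hr : ∀ n, 0 < r n) (hX : ∀ n, 0 < X n)
    (hV : ∀ n, 0 < V n) (hr0 : Tendsto r atTop (nhds 0))
    (hL : Tendsto (fun n => r n * Real.log (V n)) atTop (nhds L)) (hL0 : 0 ≤ L)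
    (hM : Tendsto (fun n => r n * Real.log (X n)) atTop (nhds M)) :
    Tendsto (fun n => r n * Real.log (X n * (1 + V n))) atTop (nhds (M + L)) := by
  have h1V : ∀ n, (0:ℝ) < 1 + V n := fun n => by linarith [(hV n)]
  have hg : Tendsto (fun n => r n * Real.log (1 + V n)) atTop (nhds L) := by
    have hup : Tendsto (fun n => r n * Real.log 2 + max 0 (r n * Real.log (V n)))
        atTop (nhds L) := by
      have : Tendsto (fun n => r n * Real.log 2 + max 0 (r n * Real.log (V n)))
          atTop (nhds (0 * Real.log 2 + max 0 L)) :=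
        (hr0.mul_const _).add (tendsto_const_nhds.max hL)
      simpa [max_eq_right hL0] using this
    refine tendsto_of_tendsto_of_tendsto_of_le_of_le hL hup (fun n => ?_) (fun n => ?_)
    · exact mul_le_mul_of_nonneg_left
        (Real.log_le_log (hV n) (by linarith [(hV n)])) (hr n).le
    · have hlog : Real.log (1 + V n) ≤ Real.log 2 + max 0 (Real.log (V n)) := by
        rcases le_total (V n) 1 with h | h
        · have : Real.log (1 + V n) ≤ Real.log 2 :=
            Real.log_le_log (h1V n) (by linarith)
          have hneg : Real.log (V n) ≤ 0 := Real.log_nonpos (hV n).le h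
          simp [max_eq_left hneg]
          linarith
        · have : Real.log (1 + V n) ≤ Real.log (2 * V n) :=
            Real.log_le_log (h1V n) (by linarith)
          rw [Real.log_mul (by norm_num) (hV n).ne'] at this
          have hpos : 0 ≤ Real.log (V n) := Real.log_nonneg h
          simpa [max_eq_right hpos] using this
      calc r n * Real.log (1 + V n)
          ≤ r n * (Real.log 2 + max 0 (Real.log (V n))) :=
            mul_le_mul_of_nonneg_left hlog (hr n).le
        _ = r n * Real.log 2 + max 0 (r n * Real.log (V n)) := by
            rw [mul_add, mul_max_of_nonneg _ _ (hr n).le, mul_zero]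
  have := hM.add hg
  refine this.congr fun n => ?_
  rw [Real.log_mul (hX n).ne' (h1V n).ne', mul_add]
end

section
/- Let (r_n), (X_n), (V_n) be sequences of positive reals with r_n → 0, r_n·log(V_n) → L ≥ 0, and r_n·log(X_n) → M. Then r_n·log(X_n·V_n/(1 + V_n)) converges to M. -/
open Filter

theorem stmt_12 (r X V : ℕ → ℝ) (L M : ℝ) (hr : ∀ n, 0 < r n) (hX : ∀ n, 0 < X n)
    (hV : ∀ n, 0 < V n) (hr0 : Tendsto r atTop (nhds 0))
    (hL : Tendsto (fun n => r n * Real.log (V n)) atTop (nhds L)) (hL0 : 0 ≤ L)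
    (hM : Tendsto (fun n => r n * Real.log (X n)) atTop (nhds M)) :
    Tendsto (fun n => r n * Real.log (X n * V n / (1 + V n))) atTop (nhds M) := by
  have h1V : ∀ n, (0:ℝ) < 1 + V n := fun n => by linarith [hV n]
  -- r * log (1 + V) → L by squeeze
  have key : Tendsto (fun n => r n * Real.log (1 + V n)) atTop (nhds L) := by
    have hlow : ∀ n, r n * Real.log (V n) ≤ r n * Real.log (1 + V n) := by
      intro n
      exact mul_le_mul_of_nonneg_left
        (Real.log_le_log (hV n) (by linarith)) (hr n).le
    have hup : ∀ n, r n * Real.log (1 + V n) ≤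
        r n * Real.log 2 + max 0 (r n * Real.log (V n)) := by
      intro n
      have h2 : (1:ℝ) + V n ≤ 2 * max 1 (V n) := by
        rcases le_total 1 (V n) with h | h
        · rw [max_eq_right h]; linarith
        · rw [max_eq_left h]; linarith
      have hlog : Real.log (1 + V n) ≤ Real.log 2 + Real.log (max 1 (V n)) := by
        calc Real.log (1 + V n) ≤ Real.log (2 * max 1 (V n)) :=
              Real.log_le_log (h1V n) h2
          _ = Real.log 2 + Real.log (max 1 (V n)) := by
              rw [Real.log_mul (by norm_num) (by positivity)]
      have hmax : Real.log (max 1 (V n)) = max 0 (Real.log (V n)) := by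
        rcases le_total 1 (V n) with h | h
        · rw [max_eq_right h, max_eq_right (Real.log_nonneg h)]
        · rw [max_eq_left h, max_eq_left (Real.log_nonpos (hV n).le h), Real.log_one]
      calc r n * Real.log (1 + V n)
          ≤ r n * (Real.log 2 + max 0 (Real.log (V n))) := by
            rw [← hmax]; exact mul_le_mul_of_nonneg_left hlog (hr n).le
        _ = r n * Real.log 2 + max 0 (r n * Real.log (V n)) := by
            rw [mul_add, mul_max_of_nonneg _ _ (hr n).le, mul_zero]
    have hupper : Tendsto (fun n => r n * Real.log 2 + max 0 (r n * Real.log (V n)))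
        atTop (nhds L) := by
      have h1 : Tendsto (fun n => r n * Real.log 2) atTop (nhds 0) := by
        simpa using hr0.mul_const (Real.log 2)
      have h2 : Tendsto (fun n => max 0 (r n * Real.log (V n))) atTop (nhds L) := by
        have := (tendsto_const_nhds (x := (0:ℝ)) (f := atTop)).max hL
        simpa [max_eq_right hL0] using this
      simpa using h1.add h2
    exact tendsto_of_tendsto_of_tendsto_of_le_of_le hL hupper hlow hup
  have heq : ∀ n, r n * Real.log (X n * V n / (1 + V n)) =
      r n * Real.log (X n) + r n * Real.log (V n) - r n * Real.log (1 + V n) := by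
    intro n
    rw [Real.log_div (mul_pos (hX n) (hV n)).ne' (h1V n).ne',
      Real.log_mul (hX n).ne' (hV n).ne']
    ring
  have := (hM.add hL).sub key
  simp only [heq]
  simpa using this
end
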